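/- arXiv:2104.12019 — 2 statements merged into one kernel-verified Lean document; each statement's English description precedes it below -/
import Mathlib

section
/- Let m_1, …, m_n be nonnegative integers. If m_1 + 2m_2 + ⋯ + n·m_n ≤ n, then E[ ∏_{j=1}^n binom(C_j(σ), m_j) ] = ∏_{j=1}^n (1/j)^{m_j} / m_j!. If m_1 + 2m_2 + ⋯ + n·m_n > n, then E[ ∏_{j=1}^n binom(C_j(σ), m_j) ] = 0. -/
/-!
Double counting. Let `D` be the disjoint union of `m_j` cycles of length `j` (`1 ≤ j ≤ n`),
with its rotation `τ`, and `k = |D| = ∑ j m_j`. Count the pairs `(σ, f)` with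
`f : D → {1,…,n}` injective and `σ ∘ f = f ∘ τ`. For fixed injective `f`, `σ` is prescribed
on the image of `f` and free on its complement: `(n - k)!` choices. Summing over the
`n (n-1) ⋯ (n-k+1)` injections gives `n!` pairs when `k ≤ n` and none otherwise. For fixed
`σ`, such an `f` is determined by the images of the base points of the cycles of `D`, which
must be points of period exactly `j` lying in pairwise distinct cycles of `σ`; there are
`∏_j j^{m_j} C_j (C_j - 1) ⋯ (C_j - m_j + 1) = ∏_j j^{m_j} m_j! binom(C_j, m_j)` of them.
-/

open Finset

/-- The number of cycles of length `j` in the permutation `σ` of `{1,…,n}`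
(fixed points count as cycles of length 1): the number of points whose
orbit under `σ` has size `j`, divided by `j`. -/
noncomputable def cycleCount {n : ℕ} (σ : Equiv.Perm (Fin n)) (j : ℕ) : ℕ :=
  (Finset.univ.filter fun x => Function.minimalPeriod (⇑σ) x = j).card / j

/-- The number of cycles of `σ` whose length lies in the set `I`. -/
noncomputable def cycleCountIn {n : ℕ} (σ : Equiv.Perm (Fin n)) (I : Finset ℕ) : ℕ :=
  ∑ j ∈ I, cycleCount σ j

/-- The total number of cycles of `σ` (fixed points included as 1-cycles). -/
noncomputable def totalCycles {n : ℕ} (σ : Equiv.Perm (Fin n)) : ℕ :=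
  cycleCountIn σ (Finset.Icc 1 n)

/-- Probability of an event under a uniformly random permutation of `{1,…,n}`. -/
noncomputable def permP (n : ℕ) (E : Equiv.Perm (Fin n) → Prop) : ℝ :=
  (Nat.card {σ : Equiv.Perm (Fin n) // E σ} : ℝ) / n.factorial

/-- Expectation of `f` under a uniformly random permutation of `{1,…,n}`. -/
noncomputable def permE (n : ℕ) (f : Equiv.Perm (Fin n) → ℝ) : ℝ :=
  (∑ σ : Equiv.Perm (Fin n), f σ) / n.factorial

/-- `H(I) = ∑_{j ∈ I} 1/j`. -/
noncomputable def Hset (I : Finset ℕ) : ℝ := ∑ j ∈ I, (1 : ℝ) / j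

/-- The harmonic sum `H_n = ∑_{i=1}^n 1/i`. -/
noncomputable def harm (n : ℕ) : ℝ := Hset (Finset.Icc 1 n)


open Function Equiv
open scoped Nat

section FiberCounting

variable {S Q ι : Type*}

theorem card_injective_comp_of_card_fiber [Fintype S] [Fintype Q] [Fintype ι] (π : S → Q)
    {j : ℕ} (hπ : ∀ q, Nat.card {s // π s = q} = j) :
    Nat.card {g : ι → S // Injective (π ∘ g)}
      = (Fintype.card Q).descFactorial (Fintype.card ι) * j ^ Fintype.card ι := by
  classical
  have hfiber (c : ι → Q) (hc : Injective c) :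
      #{g ∈ {g : ι → S | Injective (π ∘ g)} | π ∘ g = c} = j ^ Fintype.card ι := by
    have : ({g ∈ {g : ι → S | Injective (π ∘ g)} | π ∘ g = c} : Finset (ι → S))
        = Fintype.piFinset fun i => {s | π s = c i} := by
      refine Finset.ext fun g => ?_
      simp only [mem_filter, mem_univ, true_and, Fintype.mem_piFinset, ← funext_iff, comp_def]
      exact ⟨And.right, fun h => ⟨h ▸ hc, h⟩⟩
    rw [this, Fintype.card_piFinset]
    simp [← Fintype.card_subtype, ← Nat.card_eq_fintype_card, hπ]
  rw [Nat.card_eq_fintype_card, Fintype.card_subtype,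
    card_eq_sum_card_fiberwise (f := (π ∘ ·)) (t := {c | Injective c}) (by simp [Set.MapsTo]),
    sum_congr rfl fun c hc => hfiber c (by simpa using hc), sum_const, smul_eq_mul,
    ← Fintype.card_subtype, Fintype.card_congr (Equiv.subtypeInjectiveEquivEmbedding ι Q),
    Fintype.card_embedding_eq]

variable {j : ℕ}

theorem card_fiber_rangeFactorization (π : S → Q) (hπ : ∀ s, Nat.card {t // π t = π s} = j)
    (q : Set.range π) : Nat.card {s // Set.rangeFactorization π s = q} = j := by
  obtain ⟨_, s, rfl⟩ := q
  simpa only [Subtype.ext_iff, Set.rangeFactorization_coe] using hπ s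

theorem card_eq_mul_card_range [Fintype S] (π : S → Q)
    (hπ : ∀ s, Nat.card {t // π t = π s} = j) : Nat.card S = j * Nat.card (Set.range π) := by
  classical
  rw [← Nat.card_congr (Equiv.sigmaFiberEquiv (Set.rangeFactorization π)), Nat.card_sigma,
    sum_congr rfl fun q _ => card_fiber_rangeFactorization π hπ q, sum_const, card_univ,
    smul_eq_mul, mul_comm, Nat.card_eq_fintype_card]

theorem card_range_eq_card_div [Fintype S] (π : S → Q)
    (hπ : ∀ s, Nat.card {t // π t = π s} = j) : Nat.card (Set.range π) = Nat.card S / j := by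
  rcases isEmpty_or_nonempty S with hS | ⟨⟨s⟩⟩
  · simp [Set.range_eq_empty]
  · have : Nonempty {t // π t = π s} := ⟨⟨s, rfl⟩⟩
    have hj : 0 < j := hπ s ▸ Nat.card_pos
    rw [card_eq_mul_card_range π hπ, Nat.mul_div_cancel_left _ hj]

theorem card_injective_comp_eq [Fintype S] [Fintype ι] (π : S → Q)
    (hπ : ∀ s, Nat.card {t // π t = π s} = j) :
    Nat.card {g : ι → S // Injective (π ∘ g)}
      = (Nat.card (Set.range π)).descFactorial (Fintype.card ι) * j ^ Fintype.card ι := by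
  classical
  rw [Nat.card_eq_fintype_card (α := Set.range π),
    ← card_injective_comp_of_card_fiber _ (card_fiber_rangeFactorization π hπ)]
  congr! 3 with g
  exact Subtype.val_injective.of_comp_iff (Set.rangeFactorization π ∘ g)

end FiberCounting

namespace Equiv.Perm

variable {α : Type*} [Finite α] (σ : Perm α)

theorem minimalPeriod_pos (x : α) : 0 < minimalPeriod σ x :=
  minimalPeriod_pos_of_mem_periodicPts (σ.injective.mem_periodicPts x)

variable {σ} in
theorem SameCycle.minimalPeriod_eq {x y : α} (h : σ.SameCycle x y) :
    minimalPeriod σ y = minimalPeriod σ x := by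
  obtain ⟨i, rfl⟩ := h.exists_nat_pow_eq
  rw [coe_pow]
  exact minimalPeriod_apply_iterate (σ.injective.mem_periodicPts x) i

theorem card_sameCycle (x : α) : Nat.card {y // σ.SameCycle x y} = minimalPeriod σ x := by
  classical
  have := Fintype.ofFinite α
  have horbit : MulAction.orbit (Subgroup.zpowers σ) x = {y | σ.SameCycle x y} := by
    ext y
    simp only [SameCycle, MulAction.mem_orbit_iff, Subgroup.exists_zpowers, Set.mem_ofPred_eq]
    rfl
  have hsmul : (fun y : α => σ • y) = σ := funext fun y => Perm.smul_def σ y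
  rw [← hsmul, MulAction.minimalPeriod_eq_card, ← Nat.card_eq_fintype_card, horbit]
  rfl

theorem card_distinct_cycles_of_minimalPeriod_eq {M : Type*} [Fintype M] (j : ℕ) :
    Nat.card {g : M → α // (∀ b, minimalPeriod σ (g b) = j) ∧
        Injective (Quotient.mk (SameCycle.setoid σ) ∘ g)}
      = (Nat.card {x // minimalPeriod σ x = j} / j).descFactorial (Fintype.card M)
        * j ^ Fintype.card M := by
  have := Fintype.ofFinite α
  let π : {x // minimalPeriod σ x = j} → Quotient (SameCycle.setoid σ) :=
    fun x => Quotient.mk _ x.1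
  have hπ (s : {x // minimalPeriod σ x = j}) : Nat.card {t // π t = π s} = j := by
    conv_rhs => rw [← s.2, ← card_sameCycle]
    exact Nat.card_congr
      { toFun t := ⟨t.1.1, (Quotient.exact t.2).symm⟩
        invFun y := ⟨⟨y.1, y.2.minimalPeriod_eq.trans s.2⟩, Quotient.sound y.2.symm⟩
        left_inv _ := rfl
        right_inv _ := rfl }
  let e : {g : M → α // (∀ b, minimalPeriod σ (g b) = j) ∧
        Injective (Quotient.mk (SameCycle.setoid σ) ∘ g)} ≃
      {g : M → {x // minimalPeriod σ x = j} // Injective (π ∘ g)} :=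
    { toFun g := ⟨fun b => ⟨g.1 b, g.2.1 b⟩, g.2.2⟩
      invFun g := ⟨fun b => g.1 b, fun b => (g.1 b).2, g.2⟩
      left_inv _ := rfl
      right_inv _ := rfl }
  rw [Nat.card_congr e, card_injective_comp_eq π hπ, card_range_eq_card_div π hπ]

theorem card_distinct_cycles_sigma {K : Type*} [Fintype K] {M : K → Type*} {len : K → ℕ}
    (hlen : Injective len) :
    Nat.card {x : (Σ k, M k) → α // (∀ p, minimalPeriod σ (x p) = len p.1) ∧
        Injective (Quotient.mk (SameCycle.setoid σ) ∘ x)}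
      = ∏ k, Nat.card {g : M k → α // (∀ b, minimalPeriod σ (g b) = len k) ∧
          Injective (Quotient.mk (SameCycle.setoid σ) ∘ g)} := by
  rw [← Nat.card_pi]
  refine Nat.card_congr
    { toFun x k := ⟨fun b => x.1 ⟨k, b⟩, fun b => x.2.1 _,
        fun b b' h => sigma_mk_injective (x.2.2 h)⟩
      invFun y := ⟨fun p => (y p.1).1 p.2, fun p => (y p.1).2.1 p.2, ?_⟩
      left_inv x := rfl
      right_inv y := rfl }
  rintro ⟨k, b⟩ ⟨k', b'⟩ h
  obtain rfl : k = k' := hlen <| by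
    rw [← (y k).2.1 b, ← (y k').2.1 b', (Quotient.exact h).minimalPeriod_eq]
  exact congrArg (Sigma.mk k) ((y k).2.2 h)

end Equiv.Perm

section Rotation

variable {α ι : Type*}

theorem semiconj_finRotate_iff {k : ℕ} {f : Fin (k + 1) → α} {g : α → α} :
    Semiconj f (finRotate (k + 1)) g ↔
      IsPeriodicPt g (k + 1) (f 0) ∧ ∀ i : Fin (k + 1), f i = g^[i] (f 0) := by
  have hsucc (i : Fin k) : finRotate (k + 1) i.castSucc = i.succ := by
    rw [finRotate_apply, Fin.coeSucc_eq_succ]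
  constructor
  · intro h
    have hf (i : Fin (k + 1)) : f i = g^[i] (f 0) := by
      induction i using Fin.induction with
      | zero => rfl
      | succ i ih =>
        calc f i.succ = g (f i.castSucc) := by rw [← hsucc, h]
          _ = g^[i.succ] (f 0) := by
            rw [ih, Fin.val_succ, iterate_succ_apply', Fin.val_castSucc]
    refine ⟨?_, hf⟩
    calc g^[k + 1] (f 0) = g (g^[Fin.last k] (f 0)) := by
          rw [Fin.val_last, iterate_succ_apply']
      _ = f 0 := by rw [← hf, ← h, finRotate_last]
  · rintro ⟨hper, hf⟩ i
    induction i using Fin.lastCases with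
    | last =>
      rw [finRotate_last, hf (Fin.last k), Fin.val_last, ← iterate_succ_apply' g, hper.eq]
    | cast i =>
      rw [hsucc, hf i.succ, hf i.castSucc, Fin.val_succ, Fin.val_castSucc, iterate_succ_apply']

def sigmaFinRotate (ℓ : ι → ℕ) : Perm (Σ i, Fin (ℓ i + 1)) :=
  sigmaCongrRight fun i => finRotate (ℓ i + 1)

variable {ℓ : ι → ℕ}

theorem semiconj_sigmaFinRotate_iff {f : (Σ i, Fin (ℓ i + 1)) → α} {g : α → α} :
    Semiconj f (sigmaFinRotate ℓ) g ↔
      (∀ i, IsPeriodicPt g (ℓ i + 1) (f ⟨i, 0⟩)) ∧ ∀ p, f p = g^[p.2] (f ⟨p.1, 0⟩) := by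
  have : Semiconj f (sigmaFinRotate ℓ) g ↔ ∀ i, Semiconj (f ∘ Sigma.mk i) (finRotate _) g :=
    ⟨fun h i t => h ⟨i, t⟩, fun h p => h p.1 p.2⟩
  simp only [this, semiconj_finRotate_iff, forall_and, Sigma.forall, comp_apply]

variable [Finite α] (σ : Perm α)

theorem injective_sigma_iterate_iff {x : ι → α} (hx : ∀ i, IsPeriodicPt σ (ℓ i + 1) (x i)) :
    Injective (fun p : Σ i, Fin (ℓ i + 1) => σ^[p.2] (x p.1)) ↔
      (∀ i, minimalPeriod σ (x i) = ℓ i + 1) ∧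
        Injective (Quotient.mk (Perm.SameCycle.setoid σ) ∘ x) := by
  constructor
  · intro h
    refine ⟨fun i => le_antisymm ((hx i).minimalPeriod_le (ℓ i).succ_pos) ?_, fun a b hab => ?_⟩
    · by_contra! hlt
      have := h (a₁ := ⟨i, ⟨_, hlt⟩⟩) (a₂ := ⟨i, 0⟩) iterate_minimalPeriod
      exact (σ.minimalPeriod_pos (x i)).ne' (Fin.val_eq_of_eq (eq_of_heq (Sigma.mk.inj this).2))
    · obtain ⟨t, ht⟩ := (Quotient.exact hab).exists_nat_pow_eq
      rw [Perm.coe_pow, ← (hx a).iterate_mod_apply] at ht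
      exact congrArg Sigma.fst
        (h (a₁ := ⟨a, ⟨_, Nat.mod_lt t (Nat.succ_pos _)⟩⟩) (a₂ := ⟨b, 0⟩) ht)
  · rintro ⟨hper, hcyc⟩ ⟨a, s⟩ ⟨b, t⟩ (hst : σ^[s] (x a) = σ^[t] (x b))
    obtain rfl : a = b := hcyc <| Quotient.sound <| by
      have : σ.SameCycle (x a) ((σ ^ (s : ℕ)) (x a)) := Perm.sameCycle_pow_right.2 .rfl
      rwa [Perm.coe_pow, hst, ← Perm.coe_pow, Perm.sameCycle_pow_right] at this
    have hs : (s : ℕ) < minimalPeriod σ (x a) := by rw [hper a]; exact s.2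
    have ht : (t : ℕ) < minimalPeriod σ (x a) := by rw [hper a]; exact t.2
    rw [Fin.ext (iterate_injOn_Iio_minimalPeriod hs ht hst)]

theorem card_injective_semiconj_sigmaFinRotate :
    Nat.card {f : (Σ i, Fin (ℓ i + 1)) → α // Injective f ∧ Semiconj f (sigmaFinRotate ℓ) σ}
      = Nat.card {x : ι → α // (∀ i, minimalPeriod σ (x i) = ℓ i + 1) ∧
          Injective (Quotient.mk (Perm.SameCycle.setoid σ) ∘ x)} := by
  refine Nat.card_congr
    { toFun f := ⟨fun i => f.1 ⟨i, 0⟩, ?_⟩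
      invFun x := ⟨fun p => σ^[p.2] (x.1 p.1), ?_⟩
      left_inv f := Subtype.ext (funext fun p => ?_)
      right_inv x := rfl }
  · obtain ⟨hper, hf⟩ := semiconj_sigmaFinRotate_iff.1 f.2.2
    rw [← injective_sigma_iterate_iff σ hper, ← funext hf]
    exact f.2.1
  · have hper i : IsPeriodicPt σ (ℓ i + 1) (x.1 i) := x.2.1 i ▸ isPeriodicPt_minimalPeriod σ _
    exact ⟨(injective_sigma_iterate_iff σ hper).2 x.2,
      semiconj_sigmaFinRotate_iff.2 ⟨hper, fun p => rfl⟩⟩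
  · exact ((semiconj_sigmaFinRotate_iff.1 f.2.2).2 p).symm

end Rotation

section DoubleCounting

variable {α β : Type*} [Fintype α] [Fintype β]

theorem card_semiconj_of_injective (τ : Perm β) {f : β → α} (hf : Injective f) :
    Nat.card {σ : Perm α // Semiconj f τ σ} = (Fintype.card α - Fintype.card β)! := by
  classical
  let σ₀ : Perm α := τ.extendDomain (Equiv.ofInjective f hf)
  have hσ₀ (b : β) : σ₀ (f b) = f (τ b) := τ.extendDomain_apply_image _ b
  have hfix : {σ : Perm α // Semiconj f τ σ} ≃
      {π : Perm α // ∀ a, ¬a ∉ Set.range f → π a = a} :=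
    (Equiv.mulLeft σ₀⁻¹).subtypeEquiv fun σ => by
      simp only [not_not, Set.forall_mem_range, coe_mulLeft, Perm.mul_apply]
      exact forall_congr' fun b => by rw [Perm.inv_eq_iff_eq, hσ₀, eq_comm]
  rw [Nat.card_congr (hfix.trans (Perm.subtypeEquivSubtypePerm _).symm), Nat.card_perm,
    Nat.card_eq_fintype_card, Fintype.card_subtype_compl, Set.card_range_of_injective hf]

theorem sum_card_injective_semiconj [DecidableEq α] (τ : Perm β) :
    ∑ σ : Perm α, Nat.card {f : β → α // Injective f ∧ Semiconj f τ σ}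
      = (Fintype.card α).descFactorial (Fintype.card β)
        * (Fintype.card α - Fintype.card β)! := by
  classical
  have hfiber (f : β → α) : #{σ : Perm α | Injective f ∧ Semiconj f τ σ}
      = if Injective f then (Fintype.card α - Fintype.card β)! else 0 := by
    split_ifs with hf
    · simp only [hf, true_and, ← Fintype.card_subtype, ← Nat.card_eq_fintype_card,
        card_semiconj_of_injective τ hf]
    · simp [hf]
  have hswap := sum_card_bipartiteAbove_eq_sum_card_bipartiteBelow
    (s := univ) (t := univ) (r := fun (σ : Perm α) f => Injective f ∧ Semiconj f τ σ)
  simp only [bipartiteAbove, bipartiteBelow] at hswap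
  simp_rw [Nat.card_eq_fintype_card, Fintype.card_subtype]
  simp only [hswap, hfiber, sum_ite, sum_const_zero, add_zero, sum_const, smul_eq_mul]
  rw [← Fintype.card_subtype, Fintype.card_congr (Equiv.subtypeInjectiveEquivEmbedding β α),
    Fintype.card_embedding_eq]

end DoubleCounting

@[to_additive sum_Icc_one_eq_sum_fin]
theorem prod_Icc_one_eq_prod_fin {M : Type*} [CommMonoid M] (n : ℕ) (f : ℕ → M) :
    ∏ j ∈ Icc 1 n, f j = ∏ k : Fin n, f (k + 1) := by
  rw [Fin.prod_univ_eq_prod_range (fun k => f (k + 1)), range_eq_Ico, prod_Ico_add',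
    zero_add, Ico_add_one_right_eq_Icc]

theorem cycleCount_eq_card_div {n : ℕ} (σ : Perm (Fin n)) (j : ℕ) :
    cycleCount σ j = Nat.card {x // minimalPeriod σ x = j} / j := by
  rw [cycleCount, Nat.card_eq_fintype_card, Fintype.card_subtype]

theorem sum_prod_descFactorial_cycleCount (n : ℕ) (m : ℕ → ℕ) :
    ∑ σ : Perm (Fin n), ∏ j ∈ Icc 1 n, (cycleCount σ j).descFactorial (m j) * j ^ m j
      = n.descFactorial (∑ j ∈ Icc 1 n, j * m j) * (n - ∑ j ∈ Icc 1 n, j * m j)! := by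
  -- one cycle of length `k + 1` for each `b < m (k + 1)`
  let ℓ : (Σ k : Fin n, Fin (m (k + 1))) → ℕ := fun p => p.1
  have hcard : Fintype.card (Σ p, Fin (ℓ p + 1)) = ∑ j ∈ Icc 1 n, j * m j := by
    simp [ℓ, Fintype.card_sigma, Fintype.sum_sigma, sum_Icc_one_eq_sum_fin, mul_comm]
  have hcount (σ : Perm (Fin n)) :
      Nat.card {f // Injective f ∧ Semiconj f (sigmaFinRotate ℓ) σ}
        = ∏ j ∈ Icc 1 n, (cycleCount σ j).descFactorial (m j) * j ^ m j := by
    rw [card_injective_semiconj_sigmaFinRotate,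
      σ.card_distinct_cycles_sigma (len := fun k : Fin n => k + 1)
        (Nat.succ_injective.comp Fin.val_injective), prod_Icc_one_eq_prod_fin]
    simp only [σ.card_distinct_cycles_of_minimalPeriod_eq, cycleCount_eq_card_div,
      Fintype.card_fin]
  have hdouble := sum_card_injective_semiconj (α := Fin n) (sigmaFinRotate ℓ)
  rw [Fintype.card_fin, hcard] at hdouble
  rw [← hdouble]
  exact sum_congr rfl fun σ _ => (hcount σ).symm

theorem sum_prod_choose_cycleCount_mul (n : ℕ) (m : ℕ → ℕ) :
    (∑ σ : Perm (Fin n), ∏ j ∈ Icc 1 n, (cycleCount σ j).choose (m j))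
        * ∏ j ∈ Icc 1 n, (m j)! * j ^ m j
      = n.descFactorial (∑ j ∈ Icc 1 n, j * m j) * (n - ∑ j ∈ Icc 1 n, j * m j)! := by
  rw [sum_mul, ← sum_prod_descFactorial_cycleCount]
  refine sum_congr rfl fun σ _ => ?_
  rw [← prod_mul_distrib]
  refine prod_congr rfl fun j _ => ?_
  rw [Nat.descFactorial_eq_factorial_mul_choose]
  ring

/-- **Watterson's lemma.** If `m₁ + 2m₂ + ⋯ + n·mₙ ≤ n` then
`E ∏_{j=1}^n binom(C_j(σ), m_j) = ∏_{j=1}^n (1/j)^{m_j}/m_j!`, and if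
`m₁ + 2m₂ + ⋯ + n·mₙ > n` then this expectation is `0`. -/
theorem binomial_moments_single_lengths (n : ℕ) (m : ℕ → ℕ) :
    (∑ j ∈ Finset.Icc 1 n, j * m j ≤ n →
      permE n (fun σ => ∏ j ∈ Finset.Icc 1 n, ((cycleCount σ j).choose (m j) : ℝ))
        = ∏ j ∈ Finset.Icc 1 n, (1 / (j : ℝ)) ^ m j / (m j).factorial) ∧
    (n < ∑ j ∈ Finset.Icc 1 n, j * m j →
      permE n (fun σ => ∏ j ∈ Finset.Icc 1 n, ((cycleCount σ j).choose (m j) : ℝ))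
        = 0) := by
  have hcount : (∑ σ : Perm (Fin n), ∏ j ∈ Icc 1 n, ((cycleCount σ j).choose (m j) : ℝ))
        * ∏ j ∈ Icc 1 n, ((m j)! * (j : ℝ) ^ m j)
      = n.descFactorial (∑ j ∈ Icc 1 n, j * m j) * (n - ∑ j ∈ Icc 1 n, j * m j)! := by
    exact_mod_cast sum_prod_choose_cycleCount_mul n m
  set W : ℝ := ∏ j ∈ Icc 1 n, ((m j)! * (j : ℝ) ^ m j)
  have hW : W ≠ 0 := prod_ne_zero_iff.2 fun j hj => by
    have : (j : ℝ) ≠ 0 := by exact_mod_cast Nat.one_le_iff_ne_zero.1 (mem_Icc.1 hj).1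
    positivity
  refine ⟨fun hk => ?_, fun hk => ?_⟩
  · have hsum : ∑ σ : Perm (Fin n), ∏ j ∈ Icc 1 n, ((cycleCount σ j).choose (m j) : ℝ)
        = n ! / W := by
      rw [eq_div_iff hW, hcount, ← Nat.factorial_mul_descFactorial hk]
      push_cast
      ring
    have hW_inv : ∏ j ∈ Icc 1 n, (1 / (j : ℝ)) ^ m j / (m j)! = W⁻¹ := by
      rw [← prod_inv_distrib]
      exact prod_congr rfl fun j _ => by rw [one_div, inv_pow, mul_inv, div_eq_mul_inv, mul_comm]
    rw [permE, hsum, hW_inv]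
    field_simp
  · rw [Nat.descFactorial_eq_zero_iff_lt.2 hk, Nat.cast_zero, zero_mul] at hcount
    rw [permE, (mul_eq_zero.1 hcount).resolve_right hW, zero_div]
end

section
/- For every integer k with 1 ≤ k < log n, the probability that a uniformly random σ ∈ S_n has exactly k cycles satisfies P( C(σ) = k ) ≥ ( H_n^{k−1} / (n·(k−1)!) ) · ( 1 − (k−1)/log n ). -/
open Finset

/-!
The permutations of `{1,…,n}` with `k` cycles are counted by the Stirling number
`s(n,k) = (n-1)! e_{k-1}(1, 1/2, …, 1/(n-1))`: removing `0` from its cycle either deletes a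
fixed point or leaves the number of cycles unchanged, which gives the Stirling recursion.
Hence `P(C(σ) = k) = e_{k-1}/n`. For nonnegative reals with sum `p` and sum of squares `q`,
Newton's identity `p e_m = (m+1) e_{m+1} + ∑ᵢ xᵢ² e_{m-1}(x without xᵢ)` gives, by
induction, `m! e_m ≥ p^m (1 - C(m,2) q / p²)`. Here `p = H_{n-1} ≥ log n` and `q ≤ 2`, and
Bernoulli's inequality compares `H_{n-1}^m` with `H_n^m`.
-/

open Function
open scoped Nat

theorem Finset.card_image_eq_card_image_of_eq_iff {α β γ : Type*} [DecidableEq β]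
    [DecidableEq γ] {f : α → β} {g : α → γ} (s : Finset α)
    (h : ∀ x y, f x = f y ↔ g x = g y) :
    #(s.image f) = #(s.image g) := by
  classical
  have hfst : (s.image fun x => (f x, g x)).image Prod.fst = s.image f := by
    simp [image_image, Function.comp_def]
  have hsnd : (s.image fun x => (f x, g x)).image Prod.snd = s.image g := by
    simp [image_image, Function.comp_def]
  rw [← hfst, ← hsnd, card_image_of_injOn (f := Prod.fst),
    card_image_of_injOn (f := Prod.snd)] <;>
    simp only [Set.InjOn, coe_image, Set.forall_mem_image, Prod.mk.injEq] <;>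
    intro x _ y _ hxy
  exacts [⟨(h x y).2 hxy, hxy⟩, ⟨hxy, (h x y).1 hxy⟩]

namespace Equiv.Perm

variable {α β : Type*}

theorem SameCycle.map_of_forall_sameCycle {σ : Perm α} {τ : Perm β} (g : α → β)
    (hg : ∀ z, τ.SameCycle (g z) (g (σ z))) {x y : α} (h : σ.SameCycle x y) :
    τ.SameCycle (g x) (g y) := by
  obtain ⟨i, rfl⟩ := h
  induction i using Int.induction_on with
  | zero => rfl
  | succ i ih =>
    rw [add_comm, zpow_add, zpow_one, mul_apply]
    exact ih.trans (hg _)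
  | pred i ih =>
    have := hg ((σ ^ (-(i : ℤ) - 1)) x)
    rw [← mul_apply, ← zpow_one_add, show 1 + (-(i : ℤ) - 1) = -i by ring] at this
    exact ih.trans this.symm

theorem sameCycle_self_apply (σ : Perm α) (x : α) : σ.SameCycle x (σ x) :=
  sameCycle_apply_right.2 SameCycle.rfl

/-- Multiplying by `swap a p` inserts the fixed point `a` of `π` into the cycle of `p`, just
before `p`. -/
theorem sameCycle_swap_mul_iff [DecidableEq α] {π : Perm α} {a p : α} (ha : π a = a)
    (hap : a ≠ p) {x y : α} :
    (swap a p * π).SameCycle x y ↔ π.SameCycle (update id a p x) (update id a p y) := by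
  set σ := swap a p * π
  have hσa : σ a = p := by simp [σ, ha]
  have hσ : ∀ z, π z ≠ a → π z ≠ p → σ z = π z := fun z h1 h2 => by
    simp [σ, swap_apply_of_ne_of_ne h1 h2]
  have hσp : ∀ z, π z = p → σ z = a := fun z h => by simp [σ, h]
  have step_π : ∀ z, σ.SameCycle z (π z) := by
    intro z
    by_cases h1 : π z = a
    · rw [h1, π.injective (h1.trans ha.symm)]
    by_cases h2 : π z = p
    · rw [h2, ← hσa, ← hσp z h2]
      exact (sameCycle_self_apply σ z).trans (sameCycle_self_apply σ _)
    · rw [← hσ z h1 h2]; exact sameCycle_self_apply σ z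
  have step_σ : ∀ z, π.SameCycle (update id a p z) (update id a p (σ z)) := by
    intro z
    by_cases hz : z = a
    · rw [hz, hσa, update_self, update_of_ne (Ne.symm hap), id]
    have h1 : π z ≠ a := fun h => hz (π.injective (h.trans ha.symm))
    rw [update_of_ne hz]
    by_cases h2 : π z = p
    · rw [hσp z h2, update_self, ← h2]; exact sameCycle_self_apply π z
    · rw [hσ z h1 h2, update_of_ne h1]; exact sameCycle_self_apply π z
  have hg : ∀ z, σ.SameCycle z (update id a p z) := by
    intro z
    by_cases hz : z = a
    · rw [hz, update_self, ← hσa]; exact sameCycle_self_apply σ a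
    · rw [update_of_ne hz]; rfl
  exact ⟨SameCycle.map_of_forall_sameCycle _ step_σ,
    fun h => (hg x).trans ((h.map_of_forall_sameCycle id step_π).trans (hg y).symm)⟩

section Fintype

variable [Fintype α] [DecidableEq α]

def cycleClass (σ : Perm α) (x : α) : Finset α := {y | σ.SameCycle x y}

def numCycles (σ : Perm α) : ℕ := #(univ.image σ.cycleClass)

variable {σ : Perm α}

@[simp] theorem mem_cycleClass {x y : α} : y ∈ σ.cycleClass x ↔ σ.SameCycle x y := by
  simp [cycleClass]

theorem cycleClass_eq_cycleClass_iff {x y : α} :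
    σ.cycleClass x = σ.cycleClass y ↔ σ.SameCycle x y := by
  refine ⟨fun h => mem_cycleClass.1 (h ▸ mem_cycleClass.2 SameCycle.rfl), fun h => ?_⟩
  ext z
  simp only [mem_cycleClass]
  exact ⟨h.symm.trans, h.trans⟩

theorem card_cycleClass (x : α) : #(σ.cycleClass x) = minimalPeriod σ x := by
  have horbit : (σ.cycleClass x : Set α) = MulAction.orbit (Subgroup.zpowers σ) x := by
    ext y
    rw [mem_coe, mem_cycleClass, MulAction.mem_orbit_iff, Subgroup.exists_zpowers]
    rfl
  have := Fintype.ofFinite (MulAction.orbit (Subgroup.zpowers σ) x)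
  rw [← Set.ncard_coe_finset, horbit, ← Nat.card_coe_set_eq, Nat.card_eq_fintype_card,
    ← MulAction.minimalPeriod_eq_card]
  rfl

theorem cycleClass_of_apply_eq_self {a : α} (ha : σ a = a) : σ.cycleClass a = {a} := by
  ext y
  simp only [mem_cycleClass, mem_singleton]
  exact ⟨fun h => (h.eq_of_left ha).symm, fun h => h ▸ SameCycle.rfl⟩

theorem numCycles_pos [Nonempty α] (σ : Perm α) : 0 < σ.numCycles :=
  card_pos.2 (univ_nonempty.image _)

theorem numCycles_of_apply_eq_self {a : α} (ha : σ a = a) :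
    σ.numCycles = #((univ.erase a).image σ.cycleClass) + 1 := by
  conv_lhs => rw [numCycles, ← insert_erase (mem_univ a)]
  rw [image_insert, cycleClass_of_apply_eq_self ha, card_insert_of_notMem]
  intro hmem
  obtain ⟨x, hxa, hx⟩ := mem_image.1 hmem
  exact ne_of_mem_erase hxa (mem_singleton.1 (hx ▸ mem_cycleClass.2 SameCycle.rfl))

theorem numCycles_eq_card_image_of_sameCycle_iff [Fintype β] [DecidableEq β] {τ : Perm β}
    (g : α → β) (h : ∀ x y, σ.SameCycle x y ↔ τ.SameCycle (g x) (g y)) :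
    σ.numCycles = #((univ.image g).image τ.cycleClass) := by
  rw [numCycles, image_image]
  exact card_image_eq_card_image_of_eq_iff _ fun x y => by
    simp only [Function.comp_apply, cycleClass_eq_cycleClass_iff, h]

theorem numCycles_swap_mul {π : Perm α} {a p : α} (ha : π a = a) (hap : a ≠ p) :
    (swap a p * π).numCycles + 1 = π.numCycles := by
  have himage : univ.image (update id a p) = univ.erase a := by
    ext y
    simp only [mem_image, mem_univ, true_and, mem_erase, and_true]
    refine ⟨?_, fun hy => ⟨y, update_of_ne hy _ _⟩⟩
    rintro ⟨z, rfl⟩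
    by_cases hz : z = a
    · simp [hz, Ne.symm hap]
    · simp [hz]
  rw [numCycles_eq_card_image_of_sameCycle_iff _ fun x y => sameCycle_swap_mul_iff ha hap,
    himage, numCycles_of_apply_eq_self ha]

theorem card_filter_minimalPeriod_eq (σ : Perm α) (j : ℕ) :
    #{x | minimalPeriod σ x = j} = j * #{ω ∈ univ.image σ.cycleClass | #ω = j} := by
  rw [card_eq_sum_card_fiberwise (f := σ.cycleClass)
    (t := {ω ∈ univ.image σ.cycleClass | #ω = j})]
  · rw [mul_comm, ← smul_eq_mul, ← sum_const]
    refine sum_congr rfl fun ω hω => ?_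
    obtain ⟨⟨z, -, rfl⟩, hz⟩ := by simpa only [mem_filter, mem_image] using hω
    rw [← hz]
    congr 1
    ext x
    simp only [mem_filter, mem_univ, true_and, mem_cycleClass, cycleClass_eq_cycleClass_iff]
    refine ⟨fun h => h.2.symm, fun h => ⟨?_, h.symm⟩⟩
    rw [← card_cycleClass, cycleClass_eq_cycleClass_iff.2 h.symm]
  · intro x hx
    simp only [coe_filter, mem_univ, true_and, Set.mem_ofPred_eq] at hx
    simp [card_cycleClass, hx]

end Fintype

section Fin

variable {n : ℕ}

theorem decomposeFin_symm_zero_succ (e : Perm (Fin n)) (x : Fin n) :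
    decomposeFin.symm (0, e) x.succ = (e x).succ := by
  rw [decomposeFin_symm_apply_succ, swap_self, refl_apply]

theorem decomposeFin_symm_eq_swap_mul (p : Fin (n + 1)) (e : Perm (Fin n)) :
    decomposeFin.symm (p, e) = swap 0 p * decomposeFin.symm (0, e) := by
  ext x
  refine Fin.cases ?_ (fun y => ?_) x
  · simp [decomposeFin_symm_apply_zero]
  · rw [mul_apply, decomposeFin_symm_apply_succ, decomposeFin_symm_zero_succ]

theorem numCycles_decomposeFin_symm_zero (e : Perm (Fin n)) :
    (decomposeFin.symm (0, e)).numCycles = e.numCycles + 1 := by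
  set σ := decomposeFin.symm ((0 : Fin (n + 1)), e)
  have hsame : ∀ x y, e.SameCycle x y ↔ σ.SameCycle x.succ y.succ := by
    intro x y
    refine ⟨SameCycle.map_of_forall_sameCycle Fin.succ fun z => ?_, fun h => ?_⟩
    · rw [← decomposeFin_symm_zero_succ]; exact sameCycle_self_apply σ _
    · simpa using h.map_of_forall_sameCycle (Fin.cases x id : Fin (n + 1) → Fin n) fun z => by
        refine Fin.cases ?_ (fun w => ?_) z
        · rw [decomposeFin_symm_apply_zero]
        · rw [decomposeFin_symm_zero_succ]; simpa using sameCycle_self_apply e w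
  rw [numCycles_of_apply_eq_self (decomposeFin_symm_apply_zero 0 e),
    numCycles_eq_card_image_of_sameCycle_iff Fin.succ hsame, Fin.image_succ_univ, compl_singleton]

theorem numCycles_decomposeFin_symm_of_ne_zero {p : Fin (n + 1)} (hp : p ≠ 0) (e : Perm (Fin n)) :
    (decomposeFin.symm (p, e)).numCycles = e.numCycles := by
  have h := numCycles_swap_mul (decomposeFin_symm_apply_zero 0 e) (Ne.symm hp)
  rw [numCycles_decomposeFin_symm_zero] at h
  rw [decomposeFin_symm_eq_swap_mul]
  omega

theorem card_numCycles_eq_stirlingFirst (n k : ℕ) :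
    #{σ : Perm (Fin n) | σ.numCycles = k} = n.stirlingFirst k := by
  induction n generalizing k with
  | zero =>
    have h : ∀ σ : Perm (Fin 0), σ.numCycles = 0 := fun σ => by simp [numCycles]
    cases k <;> simp [h]
  | succ n ih =>
    cases k with
    | zero => simp [(numCycles_pos _).ne']
    | succ k =>
      rw [card_filter, ← decomposeFin.symm.sum_comp, Fintype.sum_prod_type, Fin.sum_univ_succ]
      simp only [numCycles_decomposeFin_symm_zero, add_left_inj,
        numCycles_decomposeFin_symm_of_ne_zero (Fin.succ_ne_zero _), ← card_filter, ih,
        Nat.stirlingFirst_succ_succ, sum_const, card_univ, Fintype.card_fin, smul_eq_mul]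
      ring

end Fin

end Equiv.Perm

open Equiv Perm

theorem cycleCount_eq_card_filter {n : ℕ} (σ : Perm (Fin n)) {j : ℕ} (hj : 0 < j) :
    cycleCount σ j = #{ω ∈ univ.image σ.cycleClass | #ω = j} := by
  rw [cycleCount, card_filter_minimalPeriod_eq, Nat.mul_div_cancel_left _ hj]

theorem totalCycles_eq_numCycles {n : ℕ} (σ : Perm (Fin n)) : totalCycles σ = σ.numCycles := by
  rw [totalCycles, cycleCountIn,
    sum_congr rfl fun j hj => cycleCount_eq_card_filter σ (mem_Icc.1 hj).1, numCycles,
    card_eq_sum_card_fiberwise (f := card) (t := Icc 1 n)]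
  rintro _ hω
  obtain ⟨x, -, rfl⟩ := mem_image.1 hω
  exact mem_Icc.2 ⟨card_pos.2 ⟨x, mem_cycleClass.2 SameCycle.rfl⟩,
    (card_le_univ _).trans_eq (Fintype.card_fin n)⟩

namespace Multiset

section CommSemiring
variable {R : Type*} [CommSemiring R]

@[simp] theorem esymm_zero_right (s : Multiset R) : s.esymm 0 = 1 := by
  simp [esymm]

@[simp] theorem esymm_zero_left_succ (m : ℕ) : (0 : Multiset R).esymm (m + 1) = 0 := rfl

theorem esymm_one_right (s : Multiset R) : s.esymm 1 = s.sum := by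
  simp [esymm, powersetCard_one, map_map]

theorem esymm_cons_succ (a : R) (s : Multiset R) (m : ℕ) :
    (a ::ₘ s).esymm (m + 1) = s.esymm (m + 1) + a * s.esymm m := by
  simp [esymm, powersetCard_cons, map_map, sum_map_mul_left]

end CommSemiring

variable {R : Type*} [Field R] [LinearOrder R] [IsStrictOrderedRing R] {s : Multiset R}

theorem esymm_nonneg (hs : ∀ x ∈ s, 0 ≤ x) (m : ℕ) : 0 ≤ s.esymm m :=
  sum_nonneg fun _ hmem => by
    obtain ⟨t, ht, rfl⟩ := mem_map.1 hmem
    exact prod_nonneg fun x hx => hs x (mem_of_le (mem_powersetCard.1 ht).1 hx)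

theorem succ_mul_esymm_succ_le (hs : ∀ x ∈ s, 0 ≤ x) (m : ℕ) :
    (m + 1) * s.esymm (m + 1) ≤ s.sum * s.esymm m := by
  induction s using Multiset.induction_on generalizing m with
  | empty => simp
  | cons a s ih =>
    have ha : 0 ≤ a := hs a (mem_cons_self a s)
    have hs' : ∀ x ∈ s, 0 ≤ x := fun x hx => hs x (mem_cons_of_mem hx)
    rcases m with _ | m
    · simpa [esymm_cons_succ, add_comm] using ih hs' 0
    · have h1 := ih hs' (m + 1)
      have h2 := ih hs' m
      have h3 := esymm_nonneg hs' m
      simp only [esymm_cons_succ, sum_cons, Nat.cast_add, Nat.cast_one] at h1 h2 ⊢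
      nlinarith [mul_le_mul_of_nonneg_left h2 ha, mul_nonneg (mul_nonneg ha ha) h3]

theorem sum_mul_esymm_succ_le (hs : ∀ x ∈ s, 0 ≤ x) (m : ℕ) :
    s.sum * s.esymm (m + 1) ≤ (m + 2) * s.esymm (m + 2) + (s.map (· ^ 2)).sum * s.esymm m := by
  induction s using Multiset.induction_on generalizing m with
  | empty => simp
  | cons a s ih =>
    have ha : 0 ≤ a := hs a (mem_cons_self a s)
    have hs' : ∀ x ∈ s, 0 ≤ x := fun x hx => hs x (mem_cons_of_mem hx)
    rcases m with _ | m
    · have h1 := ih hs' 0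
      simp only [zero_add, Nat.reduceAdd, esymm_cons_succ, esymm_one_right, esymm_zero_right,
        sum_cons, map_cons, Nat.cast_zero] at h1 ⊢
      nlinarith
    · have h1 := ih hs' (m + 1)
      have h2 := ih hs' m
      have h3 := esymm_nonneg hs' m
      simp only [esymm_cons_succ, sum_cons, map_cons, Nat.cast_add, Nat.cast_one] at h1 h2 ⊢
      nlinarith [mul_le_mul_of_nonneg_left h2 ha, mul_nonneg (mul_nonneg (mul_nonneg ha ha) ha) h3]


theorem factorial_mul_esymm_le_pow (hs : ∀ x ∈ s, 0 ≤ x) (m : ℕ) :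
    m ! * s.esymm m ≤ s.sum ^ m := by
  induction m with
  | zero => simp
  | succ m ih =>
    have hp : 0 ≤ s.sum := sum_nonneg hs
    calc ((m + 1) ! : R) * s.esymm (m + 1) = m ! * ((m + 1) * s.esymm (m + 1)) := by
          push_cast [Nat.factorial_succ]; ring
      _ ≤ m ! * (s.sum * s.esymm m) := by
          exact mul_le_mul_of_nonneg_left (mod_cast succ_mul_esymm_succ_le hs m) (by positivity)
      _ = s.sum * (m ! * s.esymm m) := by ring
      _ ≤ s.sum * s.sum ^ m := by gcongr
      _ = s.sum ^ (m + 1) := by ring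

theorem pow_mul_one_sub_le_factorial_mul_esymm (hs : ∀ x ∈ s, 0 ≤ x) (m : ℕ) :
    s.sum ^ m * (1 - m.choose 2 * (s.map (· ^ 2)).sum / s.sum ^ 2) ≤ m ! * s.esymm m := by
  set p := s.sum
  set q := (s.map (· ^ 2)).sum
  rcases eq_or_ne p 0 with hp | hp
  · rcases m with _ | m
    · simp
    · rw [hp, zero_pow m.succ_ne_zero, zero_mul]
      exact mul_nonneg (by positivity) (esymm_nonneg hs _)
  rcases m with _ | m
  · simp
  induction m with
  | zero => simp [esymm_one_right, p]
  | succ m ih =>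
    have hF : (m ! : R) * s.esymm m ≤ p ^ m := factorial_mul_esymm_le_pow hs m
    have hN : p * s.esymm (m + 1) ≤ (m + 2) * s.esymm (m + 2) + q * s.esymm m :=
      sum_mul_esymm_succ_le hs m
    have hp0 : 0 ≤ p := sum_nonneg hs
    have hq : 0 ≤ q := sum_nonneg fun x hx => by
      obtain ⟨y, -, rfl⟩ := mem_map.1 hx; positivity
    have hchoose : ((m + 2).choose 2 : R) = (m + 1).choose 2 + (m + 1) := by
      rw [Nat.choose_succ_succ', Nat.choose_one_right]; push_cast; ring
    calc p ^ (m + 2) * (1 - (m + 2).choose 2 * q / p ^ 2)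
        = p * (p ^ (m + 1) * (1 - (m + 1).choose 2 * q / p ^ 2)) - (m + 1) * q * p ^ m := by
          rw [hchoose]; field_simp; ring
      _ ≤ p * ((m + 1) ! * s.esymm (m + 1)) - (m + 1) * q * (m ! * s.esymm m) := by
          gcongr
      _ ≤ (m + 2) ! * s.esymm (m + 2) := by
          push_cast [Nat.factorial_succ]
          nlinarith [mul_le_mul_of_nonneg_left hN (Nat.cast_nonneg (α := R) m !)]

end Multiset

noncomputable def reciprocals (n : ℕ) : Multiset ℝ :=
  (Multiset.range n).map fun i => ((i + 1 : ℕ) : ℝ)⁻¹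

theorem reciprocals_succ (n : ℕ) :
    reciprocals (n + 1) = ((n + 1 : ℕ) : ℝ)⁻¹ ::ₘ reciprocals n := by
  rw [reciprocals, Multiset.range_succ, Multiset.map_cons, reciprocals]

theorem reciprocals_nonneg {n : ℕ} : ∀ x ∈ reciprocals n, 0 ≤ x := by
  simp only [reciprocals, Multiset.mem_map]
  rintro _ ⟨i, -, rfl⟩
  positivity

theorem sum_reciprocals (n : ℕ) : (reciprocals n).sum = harmonic n := by
  rw [reciprocals, harmonic]
  push_cast
  rfl

theorem sum_sq_reciprocals_le_two (n : ℕ) : ((reciprocals n).map (· ^ 2)).sum ≤ 2 := by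
  calc ((reciprocals n).map (· ^ 2)).sum
        = ∑ i ∈ range n, (((i + 1 : ℕ) : ℝ) ^ 2)⁻¹ := by
        simp only [reciprocals, Multiset.map_map, Function.comp_def, inv_pow]; rfl
    _ = ∑ i ∈ Ioo 0 (n + 1), ((i : ℝ) ^ 2)⁻¹ := by
        rw [show Ioo 0 (n + 1) = Ico 1 (n + 1) by ext; simp; omega, sum_Ico_eq_sum_range]
        simp [add_comm]
    _ ≤ 2 / ((0 : ℕ) + 1) := sum_Ioo_inv_sq_le 0 (n + 1)
    _ = 2 := by norm_num

theorem stirlingFirst_succ_succ_eq_factorial_mul_esymm (n m : ℕ) :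
    (n + 1).stirlingFirst (m + 1) = (n ! : ℝ) * (reciprocals n).esymm m := by
  induction n generalizing m with
  | zero => cases m <;> simp [reciprocals, Nat.stirlingFirst_succ_succ]
  | succ n ih =>
    rw [Nat.stirlingFirst_succ_succ, reciprocals_succ]
    cases m with
    | zero => simp [ih, Nat.factorial_succ]
    | succ m =>
      push_cast
      rw [ih, ih, Multiset.esymm_cons_succ, Nat.factorial_succ]
      push_cast
      field_simp

theorem harm_eq_harmonic (n : ℕ) : harm n = harmonic n := by
  rw [harm, Hset, harmonic, ← Ico_add_one_right_eq_Icc, sum_Ico_eq_sum_range]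
  push_cast
  simp [add_comm]

theorem pow_mul_one_sub_le_sub_pow {H a : ℝ} (hH : 0 < H) (ha : a ≤ 2 * H) (m : ℕ) :
    H ^ m * (1 - m * a / H) ≤ (H - a) ^ m := by
  have h := one_add_mul_le_pow (a := -(a / H))
    (by rw [neg_le_neg_iff, div_le_iff₀ hH]; linarith) m
  calc H ^ m * (1 - m * a / H) = H ^ m * (1 + m * -(a / H)) := by ring
    _ ≤ H ^ m * (1 + -(a / H)) ^ m := by gcongr
    _ = (H - a) ^ m := by rw [← mul_pow]; field_simp; ring

theorem mul_inv_div_add_choose_two_mul_two_div_le {p L n H : ℝ} {m : ℕ} (hL : 0 < L)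
    (hLp : L ≤ p) (hLn : L ≤ n) (hLH : L ≤ H) (hmL : m + 1 < L) :
    m * n⁻¹ / H + m.choose 2 * 2 / p ^ 2 ≤ m / L := by
  have hn : 0 < n := hL.trans_le hLn
  have hfirst : m * n⁻¹ / H ≤ m * n⁻¹ / L :=
    div_le_div_of_nonneg_left (by positivity) hL hLH
  have hsecond : m.choose 2 * 2 / p ^ 2 ≤ m * (L - 2) / L ^ 2 :=
    calc m.choose 2 * 2 / p ^ 2 ≤ m.choose 2 * 2 / L ^ 2 :=
          div_le_div_of_nonneg_left (by positivity) (by positivity) (by gcongr)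
      _ = m * (m - 1) / L ^ 2 := by rw [Nat.cast_choose_two]; ring
      _ ≤ m * (L - 2) / L ^ 2 := by gcongr (m : ℝ) * ?_ / _; linarith
  have hnL : n⁻¹ * L ≤ 1 := by rw [inv_mul_le_iff₀ hn]; linarith
  calc m * n⁻¹ / H + m.choose 2 * 2 / p ^ 2 ≤ m * n⁻¹ / L + m * (L - 2) / L ^ 2 :=
        add_le_add hfirst hsecond
    _ = m * (n⁻¹ * L + L - 2) / L ^ 2 := by field_simp; ring
    _ ≤ m * L / L ^ 2 := by gcongr; linarith
    _ = m / L := by field_simp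

theorem add_inv_pow_mul_one_sub_div_le {p q L n : ℝ} {m : ℕ} (hL : 0 < L) (hLp : L ≤ p)
    (hLn : L ≤ n) (hmL : m + 1 < L) (hq : q ≤ 2) :
    (p + n⁻¹) ^ m * (1 - m / L) ≤ p ^ m * (1 - m.choose 2 * q / p ^ 2) := by
  have hp : 0 < p := hL.trans_le hLp
  have hn : 0 < n := hL.trans_le hLn
  set H := p + n⁻¹
  have hLH : L ≤ H := by have := inv_pos.2 hn; linarith
  have hH : 0 < H := hL.trans_le hLH
  set a := m * n⁻¹ / H
  set b := m.choose 2 * 2 / p ^ 2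
  have hab : a + b ≤ m / L := mul_inv_div_add_choose_two_mul_two_div_le hL hLp hLn hLH hmL
  have ha : 0 ≤ a := by positivity
  have hb : 0 ≤ 1 - b := by
    have : (m : ℝ) / L ≤ 1 := by rw [div_le_one hL]; linarith
    linarith
  have hbernoulli : H ^ m * (1 - m * n⁻¹ / H) ≤ p ^ m := by
    simpa [H] using pow_mul_one_sub_le_sub_pow hH (a := n⁻¹) (by linarith) m
  calc H ^ m * (1 - m / L) ≤ H ^ m * ((1 - a) * (1 - b)) := by
        gcongr; nlinarith [mul_nonneg ha (by positivity : (0 : ℝ) ≤ b)]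
    _ = H ^ m * (1 - m * n⁻¹ / H) * (1 - b) := by ring
    _ ≤ p ^ m * (1 - m.choose 2 * q / p ^ 2) := by
        refine mul_le_mul hbernoulli ?_ hb (by positivity)
        unfold b
        gcongr

theorem harmonic_succ_pow_mul_one_sub_le {N m : ℕ} (hm : (m : ℝ) + 1 < Real.log (N + 1)) :
    (harmonic (N + 1) : ℝ) ^ m * (1 - m / Real.log (N + 1)) ≤
      m ! * (reciprocals N).esymm m := by
  have hL : 0 < Real.log (N + 1) := by linarith [(m.cast_nonneg : (0 : ℝ) ≤ m)]
  have hLp : Real.log (N + 1) ≤ (reciprocals N).sum := by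
    rw [sum_reciprocals]; exact_mod_cast log_add_one_le_harmonic N
  have hLn : Real.log (N + 1) ≤ N + 1 :=
    (Real.log_le_sub_one_of_pos (by positivity)).trans (by linarith)
  calc (harmonic (N + 1) : ℝ) ^ m * (1 - m / Real.log (N + 1))
      = ((reciprocals N).sum + (N + 1 : ℝ)⁻¹) ^ m * (1 - m / Real.log (N + 1)) := by
        rw [sum_reciprocals, harmonic_succ]; push_cast; rfl
    _ ≤ (reciprocals N).sum ^ m *
          (1 - m.choose 2 * ((reciprocals N).map (· ^ 2)).sum / (reciprocals N).sum ^ 2) :=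
        add_inv_pow_mul_one_sub_div_le hL hLp hLn hm (sum_sq_reciprocals_le_two N)
    _ ≤ m ! * (reciprocals N).esymm m :=
        Multiset.pow_mul_one_sub_le_factorial_mul_esymm reciprocals_nonneg m

theorem permP_totalCycles_eq_esymm_div (N m : ℕ) :
    permP (N + 1) (fun σ => totalCycles σ = m + 1) = (reciprocals N).esymm m / (N + 1) := by
  simp only [permP, totalCycles_eq_numCycles, Nat.card_eq_fintype_card, Fintype.card_subtype,
    card_numCycles_eq_stirlingFirst, stirlingFirst_succ_succ_eq_factorial_mul_esymm,
    Nat.factorial_succ]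
  push_cast
  field_simp

/-- **Lower bound for the number of permutations with `k` cycles.** For
`1 ≤ k < log n`,
`P(C(σ) = k) ≥ (H_n^{k-1}/(n (k-1)!)) (1 - (k-1)/log n)`. -/
theorem lower_bound_k_cycles (n k : ℕ) (hk : 1 ≤ k) (hklog : (k : ℝ) < Real.log n) :
    harm n ^ (k - 1) / (n * (k - 1).factorial) *
        (1 - ((k : ℝ) - 1) / Real.log n)
      ≤ permP n (fun σ => totalCycles σ = k) := by
  obtain ⟨m, rfl⟩ : ∃ m, k = m + 1 := ⟨k - 1, by omega⟩
  obtain ⟨N, rfl⟩ : ∃ N, n = N + 1 := Nat.exists_eq_add_one.2 <| Nat.pos_of_ne_zero <| by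
    rintro rfl
    rw [Nat.cast_zero, Real.log_zero] at hklog
    exact (Nat.cast_nonneg _).not_gt hklog
  push_cast at hklog ⊢
  rw [permP_totalCycles_eq_esymm_div, harm_eq_harmonic, add_sub_cancel_right]
  calc (harmonic (N + 1) : ℝ) ^ m / ((N + 1) * m !) * (1 - m / Real.log (N + 1))
      = (harmonic (N + 1) : ℝ) ^ m * (1 - m / Real.log (N + 1)) / m ! / (N + 1) := by
        rw [mul_comm, div_div]; ring
    _ ≤ m ! * (reciprocals N).esymm m / m ! / (N + 1) := by
        gcongr ?_ / _ / _
        exact harmonic_succ_pow_mul_one_sub_le hklog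
    _ = (reciprocals N).esymm m / (N + 1) := by field_simp
end
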